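/- Let λ ∈ ℝ and let w : ℝ → ℝ be continuous, 2π-periodic, odd with respect to λ (i.e., w(2λ − x) = −w(x) for all x ∈ ℝ), with w(x) ≥ 0 for all x ∈ [λ, λ+π], and w not identically zero. Then the function x ↦ (K∗w)(x) is differentiable at λ and its derivative at λ is strictly positive. -/

import Mathlib

open Real MeasureTheory Filter

/-- The 2π-periodic kernel of `D⁻²`, equal to `(1/(4π))(|x|−π)² − π/12` on `[−π,π]`. -/
noncomputable def Kper (x : ℝ) : ℝ :=
  (1 / (4 * π)) * (|x - 2 * π * ((round (x / (2 * π)) : ℤ) : ℝ)| - π) ^ 2 - π / 12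

/-- Periodic convolution with the kernel `Kper`. -/
noncomputable def Kconv (φ : ℝ → ℝ) (x : ℝ) : ℝ :=
  ∫ y in (-π)..π, Kper (x - y) * φ y

/-!
Through the norm of `AddCircle (2π)` (the distance to `2πℤ`), `Kper` is `1/2`-Lipschitz, so it is
differentiable almost everywhere and one may differentiate under the integral sign:
`(K∗w)'(λ) = ∫ K'(λ - y) w(y) dy = ∫_{-π}^{π} K'(s) w(λ - s) ds`, the last step by periodicity.
As `K'` is odd and `w` is odd about `λ`, this integrand is even, and on `(0, π)` it equals
`(π - s)/(2π) · w(λ + s) ≥ 0`. Oddness and periodicity make `w` vanish at `λ` and `λ + π`, so a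
point where `w ≠ 0` gives some `s ∈ (0, π)` with `w(λ + s) > 0`.
-/

open Set Function Topology

lemma Kper_eq_norm (x : ℝ) :
    Kper x = 1 / (4 * π) * (‖(x : AddCircle (2 * π))‖ - π) ^ 2 - π / 12 := by
  rw [Kper, AddCircle.norm_eq, mul_comm (2 * π), inv_mul_eq_div]

lemma Kper_periodic : Periodic Kper (2 * π) := fun x => by
  simp only [Kper_eq_norm, AddCircle.coe_add_period]

lemma Kper_neg (x : ℝ) : Kper (-x) = Kper x := by
  simp only [Kper_eq_norm, AddCircle.coe_neg, norm_neg]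

lemma Kper_eq_of_abs_le {x : ℝ} (hx : |x| ≤ π) :
    Kper x = 1 / (4 * π) * (|x| - π) ^ 2 - π / 12 := by
  rw [Kper_eq_norm, (AddCircle.norm_coe_eq_abs_iff _ two_pi_pos.ne').2]
  rwa [abs_of_pos two_pi_pos, mul_div_cancel_left₀ _ two_ne_zero]

lemma Kper_lipschitzWith : LipschitzWith (1 / 2) Kper := by
  have hle : ∀ z : ℝ, ‖(z : AddCircle (2 * π))‖ ≤ π := fun z => by
    simpa [abs_of_pos two_pi_pos] using AddCircle.norm_le_half_period (2 * π)
      (x := (z : AddCircle (2 * π))) two_pi_pos.ne'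
  refine LipschitzWith.of_dist_le_mul fun x y => ?_
  set a := ‖(x : AddCircle (2 * π))‖
  set b := ‖(y : AddCircle (2 * π))‖
  have hab : |a - b| ≤ |x - y| := by
    calc |a - b| ≤ ‖((x - y : ℝ) : AddCircle (2 * π))‖ := by
          rw [AddCircle.coe_sub]; exact abs_norm_sub_norm_le _ _
      _ ≤ |x - y| := QuotientAddGroup.norm_mk_le_norm
  have hsum : |a + b - 2 * π| ≤ 2 * π := by
    rw [abs_le]
    constructor <;> linarith [hle x, hle y, norm_nonneg (x : AddCircle (2 * π)),
      norm_nonneg (y : AddCircle (2 * π))]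
  have hdiff : Kper x - Kper y = (a - b) * (a + b - 2 * π) / (4 * π) := by
    rw [Kper_eq_norm, Kper_eq_norm]; ring
  rw [Real.dist_eq, Real.dist_eq, hdiff, abs_div, abs_mul, abs_of_pos (by positivity : 0 < 4 * π),
    div_le_iff₀ (by positivity)]
  push_cast
  nlinarith [abs_nonneg (a - b), abs_nonneg (a + b - 2 * π), pi_pos]

lemma hasDerivAt_Kper_of_mem_Ioo {s : ℝ} (hs : s ∈ Ioo 0 π) :
    HasDerivAt Kper ((s - π) / (2 * π)) s := by
  have hloc : (fun x => 1 / (4 * π) * (x - π) ^ 2 - π / 12) =ᶠ[𝓝 s] Kper := by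
    filter_upwards [Ioo_mem_nhds hs.1 hs.2] with x hx
    rw [Kper_eq_of_abs_le (abs_le.2 ⟨by linarith [hx.1, pi_pos], hx.2.le⟩), abs_of_pos hx.1]
  have hpoly :
      HasDerivAt (fun x => 1 / (4 * π) * (x - π) ^ 2 - π / 12) ((s - π) / (2 * π)) s := by
    have hsq := (hasDerivAt_pow 2 (s - π)).comp s ((hasDerivAt_id' s).sub_const π)
    refine ((hsq.const_mul (1 / (4 * π))).sub_const (π / 12)).congr_deriv ?_
    field_simp
    ring
  exact hpoly.congr_of_eventuallyEq hloc.symm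

lemma deriv_Kper_neg (x : ℝ) : deriv Kper (-x) = -deriv Kper x := by
  have h := deriv_comp_neg (f := Kper) (x := x)
  simp only [Kper_neg] at h
  linarith

lemma deriv_Kper_periodic : Periodic (deriv Kper) (2 * π) := fun x => by
  simpa only [Kper_periodic _] using (deriv_comp_add_const (f := Kper) (a := 2 * π) (x := x)).symm

lemma LipschitzWith.intervalIntegrable_deriv_mul {f : ℝ → ℝ} {C : NNReal}
    (hf : LipschitzWith C f) {v : ℝ → ℝ} (hv : Continuous v) (a b : ℝ) :
    IntervalIntegrable (fun x => deriv f x * v x) volume a b := by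
  refine IntervalIntegrable.mul_continuousOn ?_ hv.continuousOn
  refine (intervalIntegrable_const (c := (C : ℝ))).mono_fun
    (measurable_deriv f).aestronglyMeasurable (Eventually.of_forall fun x => ?_)
  simpa using norm_deriv_le_of_lipschitz hf (x₀ := x)

lemma LipschitzWith.hasDerivAt_intervalIntegral_comp_sub_mul {f : ℝ → ℝ} {C : NNReal}
    (hf : LipschitzWith C f) {v : ℝ → ℝ} (hv : Continuous v) (a b x₀ : ℝ) :
    HasDerivAt (fun x => ∫ y in a..b, f (x - y) * v y)
      (∫ y in a..b, deriv f (x₀ - y) * v y) x₀ := by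
  have hcont : ∀ x, Continuous fun y => f (x - y) * v y := fun x =>
    (hf.continuous.comp (continuous_const.sub continuous_id)).mul hv
  have hdiff : ∀ᵐ y, DifferentiableAt ℝ f (x₀ - y) :=
    (Measure.measurePreserving_sub_left volume x₀).quasiMeasurePreserving.ae
      hf.ae_differentiableAt_real
  refine (intervalIntegral.hasDerivAt_integral_of_dominated_loc_of_lip (s := univ)
    (bound := fun y => C * |v y|) Filter.univ_mem
    (Eventually.of_forall fun x => (hcont x).aestronglyMeasurable)
    ((hcont x₀).intervalIntegrable _ _)
    (((measurable_deriv f).comp (measurable_const.sub measurable_id)).mul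
      hv.measurable).aestronglyMeasurable
    ?_ ((hv.abs.const_mul _).intervalIntegrable _ _) ?_).2
  · refine Eventually.of_forall fun y _ =>
      (LipschitzWith.of_dist_le_mul fun x x' => ?_).lipschitzOnWith
    have hfxy := hf.dist_le_mul (x - y) (x' - y)
    rw [Real.dist_eq, Real.dist_eq, sub_sub_sub_cancel_right] at hfxy
    rw [Real.coe_nnabs, abs_of_nonneg (by positivity : (0 : ℝ) ≤ C * |v y|), Real.dist_eq,
      Real.dist_eq, ← sub_mul, abs_mul, mul_right_comm]
    gcongr
  · filter_upwards [hdiff] with y hy _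
    simpa using (hy.hasDerivAt.comp x₀ ((hasDerivAt_id' x₀).sub_const y)).mul_const (v y)

lemma Function.Periodic.intervalIntegral_comp_sub_mul_comm {f g : ℝ → ℝ} {T : ℝ}
    (hf : Periodic f T) (hg : Periodic g T) (a x : ℝ) :
    ∫ y in a..a + T, f (x - y) * g y = ∫ y in a..a + T, f y * g (x - y) := by
  have hfg : Periodic (fun y => f y * g (x - y)) T := fun y => by
    simp only [hf y, sub_add_eq_sub_sub, hg.sub_eq]
  calc ∫ y in a..a + T, f (x - y) * g y
      = ∫ y in a..a + T, f (x - y) * g (x - (x - y)) := by simp only [sub_sub_cancel]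
    _ = ∫ y in x - (a + T)..x - (a + T) + T, f y * g (x - y) := by
        rw [intervalIntegral.integral_comp_sub_left (fun y => f y * g (x - y)),
          sub_add_eq_sub_sub, sub_add_cancel]
    _ = _ := hfg.intervalIntegral_add_eq _ _

lemma intervalIntegral_neg_eq_two_mul_of_even {g : ℝ → ℝ} (hg : ∀ x, g (-x) = g x) {a : ℝ}
    (hint : IntervalIntegrable g volume 0 a) :
    ∫ x in -a..a, g x = 2 * ∫ x in 0..a, g x := by
  have hneg : ∫ x in -a..0, g x = ∫ x in 0..a, g x := by
    simpa [hg] using (intervalIntegral.integral_comp_neg (a := 0) (b := a) g).symm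
  have hint' : IntervalIntegrable g volume (-a) 0 := by
    simpa [hg] using ((IntervalIntegrable.iff_comp_neg (by simp)).1 hint).symm
  rw [← intervalIntegral.integral_add_adjacent_intervals hint' hint, hneg, two_mul]

lemma exists_pos_of_periodic_of_odd {w : ℝ → ℝ} {l a : ℝ} (ha : 0 < a)
    (hwp : Periodic w (2 * a)) (hodd : ∀ x, w (2 * l - x) = -w x)
    (hge : ∀ x ∈ Icc l (l + a), 0 ≤ w x) (hne : ∃ x, w x ≠ 0) :
    ∃ s ∈ Ioo 0 a, 0 < w (l + s) := by
  have hl : w l = 0 := by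
    have h := hodd l
    rw [two_mul, add_sub_cancel_right] at h
    linarith
  have hla : w (l + a) = 0 := by
    have h := hodd (l + a)
    rw [show 2 * l - (l + a) = l + a - 2 * a by ring, hwp.sub_eq] at h
    linarith
  have of_ne : ∀ s ∈ Icc 0 a, w (l + s) ≠ 0 → ∃ s ∈ Ioo 0 a, 0 < w (l + s) := by
    intro s hs hws
    refine ⟨s, ⟨(hs.1.lt_of_ne ?_), hs.2.lt_of_ne ?_⟩,
      (hge _ ⟨by linarith [hs.1], by linarith [hs.2]⟩).lt_of_ne' hws⟩
    · rintro rfl; exact hws (by rwa [add_zero])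
    · rintro rfl; exact hws hla
  obtain ⟨x, hx⟩ := hne
  set y := toIcoMod (mul_pos two_pos ha) (l - a) x
  have hy : y ∈ Ico (l - a) (l - a + 2 * a) := toIcoMod_mem_Ico _ _ _
  have hwy : w y = w x := hwp.sub_zsmul_eq _
  rcases le_or_gt l y with hly | hyl
  · exact of_ne (y - l) ⟨by linarith, by linarith [hy.2]⟩ (by rwa [add_sub_cancel, hwy])
  · refine of_ne (l - y) ⟨by linarith, by linarith [hy.1]⟩ ?_
    rw [show l + (l - y) = 2 * l - y by ring, hodd, hwy, neg_ne_zero]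
    exact hx

lemma intervalIntegral_deriv_Kper_mul_of_odd {w : ℝ → ℝ} {l : ℝ} (hwc : Continuous w)
    (hwp : Periodic w (2 * π)) (hodd : ∀ x, w (2 * l - x) = -w x) :
    ∫ y in -π..π, deriv Kper (l - y) * w y = 2 * ∫ s in 0..π, (π - s) / (2 * π) * w (l + s) := by
  have hw_refl : ∀ s, w (l - s) = -w (l + s) := fun s => by
    rw [← hodd, show 2 * l - (l + s) = l - s by ring]
  have hint := Kper_lipschitzWith.intervalIntegrable_deriv_mul (hwc.comp (continuous_sub_left l))
  calc ∫ y in -π..π, deriv Kper (l - y) * w y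
      = ∫ s in -π..π, deriv Kper s * w (l - s) := by
        simpa [show -π + 2 * π = π by ring] using
          deriv_Kper_periodic.intervalIntegral_comp_sub_mul_comm hwp (-π) l
    _ = 2 * ∫ s in 0..π, deriv Kper s * w (l - s) :=
        intervalIntegral_neg_eq_two_mul_of_even
          (fun s => by rw [deriv_Kper_neg, hw_refl s, sub_neg_eq_add]; ring) (hint 0 π)
    _ = 2 * ∫ s in 0..π, (π - s) / (2 * π) * w (l + s) := by
        congr 1
        refine intervalIntegral.integral_congr_Ioo_of_le pi_pos.le fun s hs => ?_
        rw [(hasDerivAt_Kper_of_mem_Ioo hs).deriv, hw_refl]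
        ring

/-- If `w` is continuous, 2π-periodic, odd about `λ`, nonnegative on `[λ, λ+π]` and not
identically zero, then `K∗w` is differentiable at `λ` with strictly positive derivative. -/
theorem Kconv_deriv_pos (l : ℝ) (w : ℝ → ℝ) (hwc : Continuous w)
    (hwp : Function.Periodic w (2 * π))
    (hodd : ∀ x, w (2 * l - x) = -w x)
    (hge : ∀ x ∈ Set.Icc l (l + π), 0 ≤ w x)
    (hne : ∃ x, w x ≠ 0) :
    DifferentiableAt ℝ (Kconv w) l ∧ 0 < deriv (Kconv w) l := by
  have hderiv : HasDerivAt (Kconv w) (∫ y in -π..π, deriv Kper (l - y) * w y) l :=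
    Kper_lipschitzWith.hasDerivAt_intervalIntegral_comp_sub_mul hwc _ _ l
  refine ⟨hderiv.differentiableAt, ?_⟩
  obtain ⟨s₀, hs₀, hws₀⟩ := exists_pos_of_periodic_of_odd pi_pos hwp hodd hge hne
  have hpos : 0 < ∫ s in 0..π, (π - s) / (2 * π) * w (l + s) :=
    intervalIntegral.integral_pos pi_pos (by fun_prop)
      (fun s hs => mul_nonneg (div_nonneg (by linarith [hs.2]) two_pi_pos.le)
        (hge _ ⟨by linarith [hs.1], by linarith [hs.2]⟩))
      ⟨s₀, Ioo_subset_Icc_self hs₀, mul_pos (div_pos (by linarith [hs₀.2]) two_pi_pos) hws₀⟩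
  rw [hderiv.deriv, intervalIntegral_deriv_Kper_mul_of_odd hwc hwp hodd]
  exact mul_pos two_pos hpos
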